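/- arXiv:2108.06312 — 3 statements merged into one kernel-verified Lean document; each statement's English description precedes it below -/
import Mathlib

section
/- Let A and B be bounded self-adjoint operators on a complex Hilbert space, let C, K, L ≥ 0, and set ε := max((4K)^{1/4}, 4L), assumed strictly positive. Suppose that for every λ in the spectrum of A, writing z = λ + iε, one has ‖(z·1 − A)^{−1}‖ ≤ C·‖(z·1 − B)^{−1}‖ + K/ε⁵ + L/ε². Then sp(A) ⊆ sp(B) + [−2Cε, 2Cε], i.e., every point of the spectrum of A is within distance 2Cε of the spectrum of B. -/
/-!
At `z = λ + iε` with `λ ∈ sp(A)` the resolvent of `A` has norm at least `1 / ε`, while the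
choice of `ε` makes the error terms `K / ε⁵ + L / ε²` at most `1 / (2ε)`. Hence
`C · ‖(z - B)⁻¹‖ ≥ 1 / (2ε)`. If every point of `sp(B)` (which is real) were farther than
`2Cε` from `λ`, it would be farther than `2Cε` from `z`, and the functional calculus would give
`2Cε · ‖(z - B)⁻¹‖ < 1`, a contradiction.
-/

open Complex

namespace IsStarNormal

variable {A : Type*} [CStarAlgebra A] {a : A} {z : ℂ}

lemma resolvent_eq_cfc (ha : IsStarNormal a) (hz : z ∉ spectrum ℂ a) :
    resolvent a z = cfc (fun x : ℂ => (z - x)⁻¹) a := by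
  have hsub : cfc (fun x : ℂ => z - x) a = algebraMap ℂ A z - a := by
    rw [cfc_sub (fun _ : ℂ => z) (fun x : ℂ => x) a, cfc_const z a, cfc_id' ℂ a]
  rw [cfc_inv (fun x : ℂ => z - x) a fun x hx h => hz (sub_eq_zero.mp h ▸ hx), hsub, resolvent]

lemma inv_norm_sub_le_norm_resolvent (ha : IsStarNormal a) (hz : z ∉ spectrum ℂ a) {x : ℂ}
    (hx : x ∈ spectrum ℂ a) : ‖z - x‖⁻¹ ≤ ‖resolvent a z‖ := by
  rw [ha.resolvent_eq_cfc hz, ← norm_inv]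
  exact norm_apply_le_norm_cfc (fun x : ℂ => (z - x)⁻¹) a hx
    (continuousOn_const.sub continuousOn_id |>.inv₀ fun y hy =>
      sub_ne_zero.mpr (ne_of_mem_of_not_mem hy hz).symm)

lemma mul_norm_resolvent_lt_one (ha : IsStarNormal a) {r : ℝ} (hr : 0 ≤ r)
    (hfar : ∀ x ∈ spectrum ℂ a, r < ‖z - x‖) : r * ‖resolvent a z‖ < 1 := by
  obtain rfl | hr := hr.eq_or_lt
  · simp
  have hz : z ∉ spectrum ℂ a := fun hz => by simpa using hr.trans (hfar z hz)
  rw [← lt_div_iff₀' hr, one_div, ha.resolvent_eq_cfc hz]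
  exact norm_cfc_lt (inv_pos.mpr hr) fun x hx => by
    rw [norm_inv]
    exact inv_strictAnti₀ hr (hfar x hx)

end IsStarNormal

lemma div_pow_five_add_div_sq_le {K L ε : ℝ} (hK : 0 ≤ K) (hε : 0 < ε)
    (hKε : (4 * K) ^ (1 / 4 : ℝ) ≤ ε) (hLε : 4 * L ≤ ε) :
    K / ε ^ 5 + L / ε ^ 2 ≤ (2 * ε)⁻¹ := by
  have h4K : 4 * K ≤ ε ^ 4 := by
    rw [one_div, Real.rpow_inv_le_iff_of_pos (by positivity) hε.le (by norm_num)] at hKε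
    exact_mod_cast hKε
  have hKterm : K / ε ^ 5 ≤ (4 * ε)⁻¹ := by
    rw [div_le_iff₀ (by positivity)]
    calc K = 4 * K / 4 := by ring
      _ ≤ ε ^ 4 / 4 := by gcongr
      _ = (4 * ε)⁻¹ * ε ^ 5 := by field_simp
  have hLterm : L / ε ^ 2 ≤ (4 * ε)⁻¹ := by
    rw [div_le_iff₀ (by positivity)]
    calc L ≤ ε / 4 := by linarith
      _ = (4 * ε)⁻¹ * ε ^ 2 := by field_simp
  calc K / ε ^ 5 + L / ε ^ 2 ≤ (4 * ε)⁻¹ + (4 * ε)⁻¹ := add_le_add hKterm hLterm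
    _ = (2 * ε)⁻¹ := by field_simp; norm_num

theorem spectrum_inclusion_of_resolvent_bound_general
    {H : Type*} [NormedAddCommGroup H] [InnerProductSpace ℂ H] [CompleteSpace H]
    (A B : H →L[ℂ] H) (hA : IsSelfAdjoint A) (hB : IsSelfAdjoint B)
    (C K L : ℝ) (hC : 0 ≤ C) (hK : 0 ≤ K)
    (ε : ℝ) (hε : ε = max ((4 * K) ^ (1 / 4 : ℝ)) (4 * L)) (hεpos : 0 < ε)
    (hres : ∀ l ∈ spectrum ℂ A,
      ‖Ring.inverse ((l + (ε : ℂ) * Complex.I) • (1 : H →L[ℂ] H) - A)‖ ≤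
        C * ‖Ring.inverse ((l + (ε : ℂ) * Complex.I) • (1 : H →L[ℂ] H) - B)‖
          + K / ε ^ 5 + L / ε ^ 2) :
    ∀ z ∈ spectrum ℂ A, ∃ w ∈ spectrum ℂ B, ∃ s : ℝ, |s| ≤ 2 * C * ε ∧ z = w + s := by
  intro l hl
  set z : ℂ := l + ε * I
  have hz : z ∉ spectrum ℂ A := fun h => by
    simpa [z, hA.im_eq_zero_of_mem_spectrum hl, hεpos.ne'] using hA.im_eq_zero_of_mem_spectrum h
  have hA_low : ε⁻¹ ≤ ‖resolvent A z‖ := by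
    simpa [z, abs_of_pos hεpos] using hA.isStarNormal.inv_norm_sub_le_norm_resolvent hz hl
  have hres_z : ‖resolvent A z‖ ≤ C * ‖resolvent B z‖ + K / ε ^ 5 + L / ε ^ 2 := by
    simpa only [resolvent, Algebra.algebraMap_eq_smul_one] using hres l hl
  have herr := div_pow_five_add_div_sq_le hK hεpos (hε ▸ le_max_left _ _) (hε ▸ le_max_right _ _)
  have hB_low : (2 * ε)⁻¹ ≤ C * ‖resolvent B z‖ := by
    have : ε⁻¹ = (2 * ε)⁻¹ + (2 * ε)⁻¹ := by field_simp; norm_num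
    linarith
  by_contra! hnear
  have hfar : ∀ x ∈ spectrum ℂ B, 2 * C * ε < ‖z - x‖ := fun x hx => by
    have hgap : 2 * C * ε < |l.re - x.re| := not_le.mp fun hle => hnear x hx _ hle <| by
      apply Complex.ext <;>
        simp [hA.im_eq_zero_of_mem_spectrum hl, hB.im_eq_zero_of_mem_spectrum hx]
    calc 2 * C * ε < |l.re - x.re| := hgap
      _ = |(z - x).re| := by simp [z]
      _ ≤ ‖z - x‖ := abs_re_le_norm _
  have hB_up := hB.isStarNormal.mul_norm_resolvent_lt_one (by positivity) hfar
  have : 1 ≤ 2 * C * ε * ‖resolvent B z‖ := by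
    rw [inv_le_iff_one_le_mul₀ (by positivity)] at hB_low
    linarith
  linarith

/-- resolvent bounds imply that the spectrum of A is contained in a
2Cε-neighborhood of the spectrum of B, for bounded self-adjoint operators. -/
theorem spectrum_inclusion_of_resolvent_bound
    {H : Type*} [NormedAddCommGroup H] [InnerProductSpace ℂ H] [CompleteSpace H]
    (A B : H →L[ℂ] H) (hA : IsSelfAdjoint A) (hB : IsSelfAdjoint B)
    (C K L : ℝ) (hC : 0 ≤ C) (hK : 0 ≤ K) (hL : 0 ≤ L)
    (ε : ℝ) (hε : ε = max ((4 * K) ^ (1 / 4 : ℝ)) (4 * L)) (hεpos : 0 < ε)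
    (hres : ∀ l ∈ spectrum ℂ A,
      ‖Ring.inverse ((l + (ε : ℂ) * Complex.I) • (1 : H →L[ℂ] H) - A)‖ ≤
        C * ‖Ring.inverse ((l + (ε : ℂ) * Complex.I) • (1 : H →L[ℂ] H) - B)‖
          + K / ε ^ 5 + L / ε ^ 2) :
    ∀ z ∈ spectrum ℂ A, ∃ w ∈ spectrum ℂ B, ∃ s : ℝ, |s| ≤ 2 * C * ε ∧ z = w + s :=
  spectrum_inclusion_of_resolvent_bound_general A B hA hB C K L hC hK ε hε hεpos hres
end

section
/- Let (A_i)_{i=1}^n and (A'_j)_{j=1}^{n'} be deterministic self-adjoint matrices in M_d(ℂ), defining the Gaussian random matrices X = Σ_{i=1}^n g_i A_i and X' = Σ_{j=1}^{n'} g'_j A'_j. Then w(X, X')⁴ ≤ v(X) σ(X) v(X') σ(X'), where w(X, X') := sup over unitary U, V, W ∈ M_d(ℂ) of ‖ Σ_{i=1}^n Σ_{j=1}^{n'} A_i U A'_j V A_i W A'_j ‖^{1/4}. -/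
open Matrix

noncomputable section

/-- The ℓ²→ℓ² operator (spectral) norm of a complex matrix. -/
def opNorm {ι κ : Type*} [Fintype ι] [Fintype κ] [DecidableEq κ] (M : Matrix ι κ ℂ) : ℝ :=
  ‖LinearMap.toContinuousLinearMap (Matrix.toEuclideanLin M)‖

/-- σ(X) = ‖Σᵢ Aᵢ²‖^{1/2}. -/
def sigmaParam {ι d : Type*} [Fintype ι] [Fintype d] [DecidableEq d]
    (A : ι → Matrix d d ℂ) : ℝ :=
  Real.sqrt (opNorm (∑ i, A i * A i))

/-- v(X) = ‖Cov(X)‖^{1/2}. -/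
def vParam {ι d : Type*} [Fintype ι] [Fintype d] [DecidableEq d]
    (A : ι → Matrix d d ℂ) : ℝ :=
  Real.sqrt (sSup {x : ℝ | ∃ M : Matrix d d ℂ,
    (Mᴴ * M).trace.re ≤ 1 ∧ x = ∑ i, ‖(A i * M).trace‖ ^ 2})

/-- The matrix alignment parameter
w(X,X') = sup_{U,V,W unitary} ‖Σᵢⱼ AᵢUA'ⱼVAᵢWA'ⱼ‖^{1/4}. -/
def wParam {ι ι' d : Type*} [Fintype ι] [Fintype ι'] [Fintype d] [DecidableEq d]
    (A : ι → Matrix d d ℂ) (A' : ι' → Matrix d d ℂ) : ℝ :=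
  sSup {x : ℝ | ∃ U V W : Matrix d d ℂ,
    U ∈ Matrix.unitaryGroup d ℂ ∧ V ∈ Matrix.unitaryGroup d ℂ ∧
    W ∈ Matrix.unitaryGroup d ℂ ∧
    x = opNorm (∑ i, ∑ j, A i * U * A' j * V * A i * W * A' j) ^ (1 / 4 : ℝ)}

/-!
In coordinates, `⟪x, (∑ᵢⱼ Aᵢ U A'ⱼ V Aᵢ W A'ⱼ) y⟫` is the inner product, in `ℂᵈ ⊗ ℂᵈ ⊗ ℂᵈ`, of the
tensors `∑ᵢ Aᵢx ⊗ Aᵢ` and `∑ⱼ U A'ⱼ V ⊗ W A'ⱼ y` (the middle `Aᵢ` crosses over as `Aᵢ = Aᵢ*`), so by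
Cauchy–Schwarz it suffices to bound their norms. Each slice of the first tensor along its `Aᵢx` leg
is a matrix `∑ᵢ γᵢ Aᵢ`, whose squared Frobenius norm is at most `v(X)² ∑ᵢ |γᵢ|²` by duality with the
supremum defining `v(X)`; summing over the slices leaves `v(X)² ∑ᵢ ‖Aᵢx‖² ≤ v(X)² σ(X)² ‖x‖²`. The
second tensor is bounded in the same way once the unitaries are absorbed by the unitary invariance
of the Frobenius and Euclidean norms.
-/

open Finset

section Frobenius

variable {m n : Type*} [Fintype m] [Fintype n]

lemma Complex.norm_sum_mul_sq_le {ι : Type*} [Fintype ι] (f g : ι → ℂ) :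
    ‖∑ i, f i * g i‖ ^ 2 ≤ (∑ i, ‖f i‖ ^ 2) * ∑ i, ‖g i‖ ^ 2 := by
  calc ‖∑ i, f i * g i‖ ^ 2 ≤ (∑ i, ‖f i‖ * ‖g i‖) ^ 2 := by
        gcongr
        exact (norm_sum_le _ _).trans_eq (by simp_rw [norm_mul])
    _ ≤ _ := sum_mul_sq_le_sq_mul_sq _ _ _

lemma Matrix.re_trace_conjTranspose_mul_self (M : Matrix m n ℂ) :
    (Mᴴ * M).trace.re = ∑ i, ∑ j, ‖M i j‖ ^ 2 := by
  simp only [trace, diag_apply, mul_apply, conjTranspose_apply, Complex.re_sum]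
  rw [sum_comm]
  congr! 2 with i _ j
  rw [← Complex.normSq_eq_norm_sq, Complex.normSq_apply, Complex.mul_re, Complex.star_def,
    Complex.conj_re, Complex.conj_im]
  ring

lemma Matrix.re_trace_conjTranspose_mul_self_nonneg (M : Matrix m n ℂ) :
    0 ≤ (Mᴴ * M).trace.re := by
  rw [re_trace_conjTranspose_mul_self]; positivity

lemma Matrix.norm_trace_mul_sq_le (B : Matrix m n ℂ) (M : Matrix n m ℂ) :
    ‖(B * M).trace‖ ^ 2 ≤ (Bᴴ * B).trace.re * (Mᴴ * M).trace.re := by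
  have h := Complex.norm_sum_mul_sq_le (fun p : m × n => B p.1 p.2) (fun p => M p.2 p.1)
  simp only [Fintype.sum_prod_type] at h
  rw [re_trace_conjTranspose_mul_self, re_trace_conjTranspose_mul_self, sum_comm (γ := n)]
  simpa [trace, mul_apply] using h

variable [DecidableEq m] [DecidableEq n]

lemma Matrix.trace_conjTranspose_mul_self_unitary_mul_mul_unitary {U : Matrix m m ℂ}
    {V : Matrix n n ℂ} (hU : U ∈ unitaryGroup m ℂ) (hV : V ∈ unitaryGroup n ℂ)
    (N : Matrix m n ℂ) :
    ((U * N * V)ᴴ * (U * N * V)).trace = (Nᴴ * N).trace := by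
  have hU' : Uᴴ * U = 1 := hU.1
  have hV' : V * Vᴴ = 1 := hV.2
  rw [conjTranspose_mul, conjTranspose_mul]
  calc (Vᴴ * (Nᴴ * Uᴴ) * (U * N * V)).trace = (Vᴴ * (Nᴴ * (Uᴴ * U) * N) * V).trace := by
        simp only [Matrix.mul_assoc]
    _ = (V * Vᴴ * (Nᴴ * N)).trace := by
        rw [hU', Matrix.mul_one, trace_mul_comm, ← Matrix.mul_assoc]
    _ = (Nᴴ * N).trace := by rw [hV', Matrix.one_mul]

end Frobenius

section Covariance

variable {ι d : Type*} [Fintype ι] [Fintype d] (A : ι → Matrix d d ℂ)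

lemma bddAbove_vParam_set : BddAbove {x : ℝ | ∃ M : Matrix d d ℂ,
    (Mᴴ * M).trace.re ≤ 1 ∧ x = ∑ i, ‖(A i * M).trace‖ ^ 2} := by
  refine ⟨∑ i, ((A i)ᴴ * A i).trace.re, ?_⟩
  rintro x ⟨M, hM, rfl⟩
  gcongr with i
  calc ‖(A i * M).trace‖ ^ 2 ≤ ((A i)ᴴ * A i).trace.re * (Mᴴ * M).trace.re :=
        norm_trace_mul_sq_le _ _
    _ ≤ ((A i)ᴴ * A i).trace.re :=
        mul_le_of_le_one_right (re_trace_conjTranspose_mul_self_nonneg _) hM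

variable [DecidableEq d]

lemma sum_norm_trace_mul_sq_le (M : Matrix d d ℂ) :
    ∑ i, ‖(A i * M).trace‖ ^ 2 ≤ vParam A ^ 2 * (Mᴴ * M).trace.re := by
  set t := (Mᴴ * M).trace.re
  have ht : 0 ≤ t := re_trace_conjTranspose_mul_self_nonneg M
  rcases ht.eq_or_lt with ht0 | htpos
  · calc ∑ i, ‖(A i * M).trace‖ ^ 2 ≤ ∑ i, ((A i)ᴴ * A i).trace.re * t :=
          sum_le_sum fun i _ => norm_trace_mul_sq_le _ _
      _ = vParam A ^ 2 * t := by simp [← ht0]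
  -- `c • M` has unit Frobenius norm, so it competes in the supremum defining `v`.
  set c : ℂ := (((√t)⁻¹ : ℝ) : ℂ)
  have hc : ‖c‖ ^ 2 = t⁻¹ := by
    rw [Complex.norm_real, Real.norm_of_nonneg (by positivity), inv_pow, Real.sq_sqrt ht]
  have hmem : ∑ i, ‖(A i * (c • M)).trace‖ ^ 2 ≤ vParam A ^ 2 := by
    rw [vParam, Real.sq_sqrt (Real.sSup_nonneg (by rintro _ ⟨M, -, rfl⟩; positivity))]
    refine le_csSup (bddAbove_vParam_set A) ⟨c • M, ?_, rfl⟩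
    simp only [conjTranspose_smul, smul_mul_smul_comm, trace_smul, smul_eq_mul]
    rw [Complex.star_def, Complex.conj_ofReal, ← Complex.ofReal_mul, Complex.re_ofReal_mul,
      ← sq, inv_pow, Real.sq_sqrt ht, inv_mul_cancel₀ htpos.ne']
  simp only [Matrix.mul_smul, trace_smul, smul_eq_mul, norm_mul, mul_pow, hc, ← mul_sum] at hmem
  rwa [inv_mul_le_iff₀ htpos, mul_comm] at hmem

variable {A : ι → Matrix d d ℂ}

lemma re_trace_conjTranspose_mul_self_sum_smul_le (hA : ∀ i, (A i).IsHermitian) (γ : ι → ℂ) :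
    ((∑ i, γ i • A i)ᴴ * ∑ i, γ i • A i).trace.re ≤ vParam A ^ 2 * ∑ i, ‖γ i‖ ^ 2 := by
  set N := ∑ i, γ i • A i
  set t := (Nᴴ * N).trace.re
  have hNH : (Nᴴ * N).trace = ∑ i, star (γ i) * (A i * N).trace := by
    simp only [N, conjTranspose_sum, conjTranspose_smul, (hA _).eq, Finset.sum_mul, trace_sum,
      smul_mul_assoc, trace_smul, smul_eq_mul]
  have hsq : t ^ 2 ≤ (∑ i, ‖γ i‖ ^ 2) * (vParam A ^ 2 * t) := by
    calc t ^ 2 ≤ ‖(Nᴴ * N).trace‖ ^ 2 := by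
          gcongr
          · exact re_trace_conjTranspose_mul_self_nonneg N
          · exact Complex.re_le_norm _
      _ ≤ (∑ i, ‖star (γ i)‖ ^ 2) * ∑ i, ‖(A i * N).trace‖ ^ 2 :=
          hNH ▸ Complex.norm_sum_mul_sq_le _ _
      _ ≤ (∑ i, ‖γ i‖ ^ 2) * (vParam A ^ 2 * t) := by
          simp only [norm_star]
          gcongr
          exact sum_norm_trace_mul_sq_le A N
  have ht : 0 ≤ t := re_trace_conjTranspose_mul_self_nonneg N
  have hc : 0 ≤ vParam A ^ 2 * ∑ i, ‖γ i‖ ^ 2 := by positivity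
  nlinarith

lemma sum_norm_sum_mul_apply_sq_le (hA : ∀ i, (A i).IsHermitian) (γ : ι → ℂ) :
    ∑ a, ∑ b, ‖∑ i, γ i * A i a b‖ ^ 2 ≤ vParam A ^ 2 * ∑ i, ‖γ i‖ ^ 2 := by
  simpa [re_trace_conjTranspose_mul_self, Matrix.sum_apply] using
    re_trace_conjTranspose_mul_self_sum_smul_le hA γ

end Covariance

section Sigma

variable {ι d : Type*} [Fintype ι] [Fintype d] [DecidableEq d] {A : ι → Matrix d d ℂ}

open scoped InnerProductSpace

lemma sum_norm_mulVec_sq_eq (M : Matrix d d ℂ) (z : d → ℂ) :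
    ∑ a, ‖(M *ᵥ z) a‖ ^ 2 = ‖toEuclideanCLM (𝕜 := ℂ) M (WithLp.toLp 2 z)‖ ^ 2 := by
  rw [EuclideanSpace.norm_sq_eq]; rfl

lemma sum_norm_unitary_mulVec_sq {W : Matrix d d ℂ} (hW : W ∈ unitaryGroup d ℂ) (z : d → ℂ) :
    ∑ a, ‖(W *ᵥ z) a‖ ^ 2 = ∑ a, ‖z a‖ ^ 2 := by
  rw [sum_norm_mulVec_sq_eq, ContinuousLinearMap.norm_map_of_mem_unitary
    (Unitary.map_mem toEuclideanCLM hW), EuclideanSpace.norm_sq_eq]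

lemma sum_norm_mulVec_sq_le (hA : ∀ i, (A i).IsHermitian) (x : d → ℂ) :
    ∑ i, ∑ a, ‖(A i *ᵥ x) a‖ ^ 2 ≤ sigmaParam A ^ 2 * ∑ a, ‖x a‖ ^ 2 := by
  set x' := WithLp.toLp 2 x with hx'
  have hsq : ∀ M : Matrix d d ℂ, M.IsHermitian →
      ‖toEuclideanCLM (𝕜 := ℂ) M x'‖ ^ 2 = (⟪x', toEuclideanCLM (𝕜 := ℂ) (M * M) x'⟫_ℂ).re := by
    intro M hM
    rw [ContinuousLinearMap.apply_norm_sq_eq_inner_adjoint_right,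
      ← ContinuousLinearMap.star_eq_adjoint, ← map_star, star_eq_conjTranspose, hM.eq, map_mul]
    rfl
  have hσ : sigmaParam A ^ 2 = ‖toEuclideanCLM (𝕜 := ℂ) (∑ i, A i * A i)‖ :=
    Real.sq_sqrt (norm_nonneg _)
  calc ∑ i, ∑ a, ‖(A i *ᵥ x) a‖ ^ 2
      = (⟪x', toEuclideanCLM (𝕜 := ℂ) (∑ i, A i * A i) x'⟫_ℂ).re := by
        simp only [sum_norm_mulVec_sq_eq, ← hx', fun i => hsq _ (hA i), map_sum, _root_.sum_apply,
          inner_sum, Complex.re_sum]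
    _ ≤ ‖x'‖ * ‖toEuclideanCLM (𝕜 := ℂ) (∑ i, A i * A i) x'‖ :=
        (Complex.re_le_norm _).trans (norm_inner_le_norm _ _)
    _ ≤ ‖x'‖ * (‖toEuclideanCLM (𝕜 := ℂ) (∑ i, A i * A i)‖ * ‖x'‖) := by
        gcongr; exact ContinuousLinearMap.le_opNorm _ _
    _ = sigmaParam A ^ 2 * ∑ a, ‖x a‖ ^ 2 := by
        rw [hσ, ← EuclideanSpace.norm_sq_eq x']; ring

end Sigma

section Alignment

variable {d : Type*} [Fintype d]

lemma star_dotProduct_mul_mul_mul_mulVec {H : Matrix d d ℂ} (hH : H.IsHermitian)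
    (P Q : Matrix d d ℂ) (x y : d → ℂ) :
    star x ⬝ᵥ ((H * P * H * Q) *ᵥ y) =
      ∑ p : d × d × d, star ((H *ᵥ x) p.1 * H p.2.1 p.2.2) * (P p.1 p.2.2 * (Q *ᵥ y) p.2.1) := by
  have hx : star x ᵥ* H = star (H *ᵥ x) := by rw [star_mulVec, hH.eq]
  rw [← mulVec_mulVec, ← mulVec_mulVec, ← mulVec_mulVec, dotProduct_mulVec, hx]
  generalize Q *ᵥ y = z
  simp only [Fintype.sum_prod_type, dotProduct, mulVec, star_mul', Pi.star_apply, Finset.mul_sum]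
  refine sum_congr rfl fun a _ => ?_
  rw [sum_comm]
  refine sum_congr rfl fun e _ => sum_congr rfl fun b _ => ?_
  simp only [hH.apply]
  ring

variable {ι ι' : Type*} [Fintype ι] [Fintype ι'] {A : ι → Matrix d d ℂ} {A' : ι' → Matrix d d ℂ}

lemma star_dotProduct_sum_mulVec_eq (hA : ∀ i, (A i).IsHermitian) (U V W : Matrix d d ℂ)
    (x y : d → ℂ) :
    star x ⬝ᵥ ((∑ i, ∑ j, A i * U * A' j * V * A i * W * A' j) *ᵥ y) =
      ∑ p : d × d × d, star (∑ i, (A i *ᵥ x) p.1 * A i p.2.1 p.2.2) *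
        ∑ j, (U * A' j * V) p.1 p.2.2 * ((W * A' j) *ᵥ y) p.2.1 := by
  have hterm : ∀ i j, A i * U * A' j * V * A i * W * A' j =
      A i * (U * A' j * V) * A i * (W * A' j) := by
    intro i j; simp only [Matrix.mul_assoc]
  simp only [hterm, sum_mulVec, dotProduct_sum, star_dotProduct_mul_mul_mul_mulVec (hA _),
    star_sum, sum_mul_sum]
  exact (sum_congr rfl fun i _ => sum_comm).trans sum_comm

end Alignment

section Bounds

variable {d ι ι' : Type*} [Fintype d] [DecidableEq d] [Fintype ι] [Fintype ι']
  {A : ι → Matrix d d ℂ} {A' : ι' → Matrix d d ℂ}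

lemma sum_norm_sum_mulVec_mul_apply_sq_le (hA : ∀ i, (A i).IsHermitian) (x : d → ℂ) :
    ∑ p : d × d × d, ‖∑ i, (A i *ᵥ x) p.1 * A i p.2.1 p.2.2‖ ^ 2 ≤
      vParam A ^ 2 * (sigmaParam A ^ 2 * ∑ a, ‖x a‖ ^ 2) := by
  calc ∑ p : d × d × d, ‖∑ i, (A i *ᵥ x) p.1 * A i p.2.1 p.2.2‖ ^ 2
      ≤ ∑ a, vParam A ^ 2 * ∑ i, ‖(A i *ᵥ x) a‖ ^ 2 := by
        simp only [Fintype.sum_prod_type]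
        exact sum_le_sum fun a _ => sum_norm_sum_mul_apply_sq_le hA _
    _ = vParam A ^ 2 * ∑ i, ∑ a, ‖(A i *ᵥ x) a‖ ^ 2 := by rw [← mul_sum, sum_comm]
    _ ≤ vParam A ^ 2 * (sigmaParam A ^ 2 * ∑ a, ‖x a‖ ^ 2) := by
        gcongr; exact sum_norm_mulVec_sq_le hA x

lemma sum_norm_sum_apply_mul_mulVec_sq_le (hA' : ∀ j, (A' j).IsHermitian)
    {U V W : Matrix d d ℂ} (hU : U ∈ unitaryGroup d ℂ) (hV : V ∈ unitaryGroup d ℂ)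
    (hW : W ∈ unitaryGroup d ℂ) (y : d → ℂ) :
    ∑ p : d × d × d, ‖∑ j, (U * A' j * V) p.1 p.2.2 * ((W * A' j) *ᵥ y) p.2.1‖ ^ 2 ≤
      vParam A' ^ 2 * (sigmaParam A' ^ 2 * ∑ a, ‖y a‖ ^ 2) := by
  have hslice : ∀ e, ∑ a, ∑ b, ‖∑ j, (U * A' j * V) a b * ((W * A' j) *ᵥ y) e‖ ^ 2 ≤
      vParam A' ^ 2 * ∑ j, ‖((W * A' j) *ᵥ y) e‖ ^ 2 := by
    intro e
    set N := ∑ j, ((W * A' j) *ᵥ y) e • A' j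
    have hN : ∀ a b, (U * N * V) a b = ∑ j, (U * A' j * V) a b * ((W * A' j) *ᵥ y) e := by
      intro a b
      simp only [N, Matrix.mul_sum, Matrix.sum_mul, Matrix.mul_smul, Matrix.smul_mul,
        Matrix.sum_apply, Matrix.smul_apply, smul_eq_mul, mul_comm]
    simp only [← hN, ← re_trace_conjTranspose_mul_self,
      trace_conjTranspose_mul_self_unitary_mul_mul_unitary hU hV]
    exact re_trace_conjTranspose_mul_self_sum_smul_le hA' _
  calc ∑ p : d × d × d, ‖∑ j, (U * A' j * V) p.1 p.2.2 * ((W * A' j) *ᵥ y) p.2.1‖ ^ 2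
      ≤ ∑ e, vParam A' ^ 2 * ∑ j, ‖((W * A' j) *ᵥ y) e‖ ^ 2 := by
        simp only [Fintype.sum_prod_type]
        rw [sum_comm]
        exact sum_le_sum fun e _ => hslice e
    _ = vParam A' ^ 2 * ∑ j, ∑ e, ‖(A' j *ᵥ y) e‖ ^ 2 := by
        rw [← mul_sum, sum_comm]
        simp only [← mulVec_mulVec, sum_norm_unitary_mulVec_sq hW]
    _ ≤ vParam A' ^ 2 * (sigmaParam A' ^ 2 * ∑ a, ‖y a‖ ^ 2) := by
        gcongr; exact sum_norm_mulVec_sq_le hA' y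

end Bounds

section Assembly

variable {d : Type*} [Fintype d] [DecidableEq d]

open scoped InnerProductSpace in
lemma opNorm_le_of_norm_star_dotProduct_mulVec_sq_le {M : Matrix d d ℂ} {C : ℝ} (hC : 0 ≤ C)
    (h : ∀ x y : d → ℂ,
      ‖star x ⬝ᵥ (M *ᵥ y)‖ ^ 2 ≤ C ^ 2 * ((∑ a, ‖x a‖ ^ 2) * ∑ a, ‖y a‖ ^ 2)) :
    opNorm M ≤ C := by
  refine ContinuousLinearMap.opNorm_le_of_re_inner_le hC fun x y hx hy => ?_
  have hform : ‖⟪LinearMap.toContinuousLinearMap (toEuclideanLin M) x, y⟫_ℂ‖ =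
      ‖star y.ofLp ⬝ᵥ (M *ᵥ x.ofLp)‖ := by
    rw [norm_inner_symm, EuclideanSpace.inner_eq_star_dotProduct, dotProduct_comm]
    rfl
  refine (Complex.re_le_norm _).trans ?_
  rw [hform, ← sq_le_sq₀ (norm_nonneg _) hC]
  simpa [← EuclideanSpace.norm_sq_eq, hx, hy] using h y.ofLp x.ofLp

variable {ι ι' : Type*} [Fintype ι] [Fintype ι'] {A : ι → Matrix d d ℂ} {A' : ι' → Matrix d d ℂ}

lemma opNorm_sum_mul_le (hA : ∀ i, (A i).IsHermitian) (hA' : ∀ j, (A' j).IsHermitian)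
    {U V W : Matrix d d ℂ} (hU : U ∈ unitaryGroup d ℂ) (hV : V ∈ unitaryGroup d ℂ)
    (hW : W ∈ unitaryGroup d ℂ) :
    opNorm (∑ i, ∑ j, A i * U * A' j * V * A i * W * A' j) ≤
      vParam A * sigmaParam A * (vParam A' * sigmaParam A') := by
  refine opNorm_le_of_norm_star_dotProduct_mulVec_sq_le (by unfold vParam sigmaParam; positivity)
    fun x y => ?_
  rw [star_dotProduct_sum_mulVec_eq hA]
  calc _ ≤ (∑ p : d × d × d, ‖star (∑ i, (A i *ᵥ x) p.1 * A i p.2.1 p.2.2)‖ ^ 2) *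
        ∑ p : d × d × d, ‖∑ j, (U * A' j * V) p.1 p.2.2 * ((W * A' j) *ᵥ y) p.2.1‖ ^ 2 :=
        Complex.norm_sum_mul_sq_le _ _
    _ ≤ (vParam A ^ 2 * (sigmaParam A ^ 2 * ∑ a, ‖x a‖ ^ 2)) *
        (vParam A' ^ 2 * (sigmaParam A' ^ 2 * ∑ a, ‖y a‖ ^ 2)) := by
        simp only [norm_star]
        gcongr
        · exact sum_norm_sum_mulVec_mul_apply_sq_le hA x
        · exact sum_norm_sum_apply_mul_mulVec_sq_le hA' hU hV hW y
    _ = _ := by ring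

lemma wParam_pow_four_le_of_opNorm_le {C : ℝ} (hC : 0 ≤ C)
    (h : ∀ U V W : Matrix d d ℂ, U ∈ unitaryGroup d ℂ → V ∈ unitaryGroup d ℂ →
      W ∈ unitaryGroup d ℂ → opNorm (∑ i, ∑ j, A i * U * A' j * V * A i * W * A' j) ≤ C) :
    wParam A A' ^ 4 ≤ C := by
  have hle : wParam A A' ≤ C ^ (1 / 4 : ℝ) := by
    refine Real.sSup_le ?_ (by positivity)
    rintro _ ⟨U, V, W, hU, hV, hW, rfl⟩
    exact Real.rpow_le_rpow (norm_nonneg _) (h U V W hU hV hW) (by norm_num)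
  have hnonneg : 0 ≤ wParam A A' := by
    refine Real.sSup_nonneg ?_
    rintro _ ⟨U, V, W, -, -, -, rfl⟩
    exact Real.rpow_nonneg (norm_nonneg _) _
  calc wParam A A' ^ 4 ≤ (C ^ (1 / 4 : ℝ)) ^ 4 := by gcongr
    _ = C := by rw [← Real.rpow_natCast, ← Real.rpow_mul hC]; norm_num

end Assembly

/-- w(X,X')⁴ ≤ v(X)σ(X)v(X')σ(X'). -/
theorem wParam_pow_four_le
    (d n n' : ℕ)
    (A : Fin n → Matrix (Fin d) (Fin d) ℂ) (hA : ∀ i, (A i).IsHermitian)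
    (A' : Fin n' → Matrix (Fin d) (Fin d) ℂ) (hA' : ∀ j, (A' j).IsHermitian) :
    wParam A A' ^ 4 ≤ vParam A * sigmaParam A * (vParam A' * sigmaParam A') :=
  wParam_pow_four_le_of_opNorm_le (by unfold vParam sigmaParam; positivity)
    fun _ _ _ hU hV hW => opNorm_sum_mul_le hA hA' hU hV hW
end
end

section
/- Let d ≥ 1 and let (b_{ij})_{1 ≤ i,j ≤ d} be nonnegative reals with b_{ij} = b_{ji}. Define K := inf_{x ∈ ℝ^d, x > 0} max_{1 ≤ i ≤ d} ( 1/x_i + Σ_{j=1}^d b_{ij}² x_j ). Then: (i) K = 2 sup_{w ∈ Δ^{d−1}} Σ_{i=1}^d ( w_i Σ_{j=1}^d b_{ij}² w_j )^{1/2}, where Δ^{d−1} = { w ∈ ℝ^d : w ≥ 0, Σ_i w_i = 1 }; (ii) K ≤ 2 max_i ( Σ_j b_{ij}² )^{1/2}; and (iii) if the nonnegative matrix B = (b_{ij}²) is irreducible, then K = 2 max_i ( Σ_j b_{ij}² )^{1/2} holds if and only if max_i Σ_j b_{ij}² = min_i Σ_j b_{ij}². -/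
/-!
Write `A = (b_ij²)` and `L(w, x) = ∑ᵢ wᵢ (1/xᵢ + (A x)ᵢ)`. Over the simplex the supremum of
`L(·, x)` is `maxᵢ (1/xᵢ + (A x)ᵢ)`, so `K = inf_{x > 0} sup_w L(w, x)`. By symmetry of `A`,
`L(w, x) = ∑ᵢ (wᵢ / xᵢ + xᵢ (A w)ᵢ)`, which is convex in `x`, and by AM-GM its infimum over
`x > 0` is `2 ∑ᵢ √(wᵢ (A w)ᵢ)`. Sion's minimax theorem (the simplex is compact, `L` is linear in
`w`) swaps `inf` and `sup`, giving (i).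

Cauchy–Schwarz bounds `∑ᵢ √(wᵢ (A w)ᵢ)` by `√(∑ⱼ wⱼ Rⱼ) ≤ √(max R)`, where `R` is the vector of
row sums; this is (ii). If equality holds, AM-GM with the constant `x = 1/√(max R)` is tight at a
maximiser `w`, which forces `A w = (max R) w`. For irreducible `A` the eigenvector `w` is
positive, and then `∑ⱼ wⱼ (max R - Rⱼ) = 0` makes all row sums equal. Conversely, for constant
row sums the barycenter attains `√(max R)`.
-/

open Matrix

noncomputable section

namespace Real

theorem add_sub_two_mul_sqrt_mul {p q : ℝ} (hp : 0 ≤ p) (hq : 0 ≤ q) :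
    p + q - 2 * √(p * q) = (√p - √q) ^ 2 := by
  rw [sub_sq, sq_sqrt hp, sq_sqrt hq, sqrt_mul hp]
  ring

theorem two_mul_sqrt_mul_le_add {p q : ℝ} (hp : 0 ≤ p) (hq : 0 ≤ q) :
    2 * √(p * q) ≤ p + q :=
  sub_nonneg.mp (add_sub_two_mul_sqrt_mul hp hq ▸ sq_nonneg _)

theorem eq_of_two_mul_sqrt_mul_eq_add {p q : ℝ} (hp : 0 ≤ p) (hq : 0 ≤ q)
    (h : 2 * √(p * q) = p + q) : p = q := by
  have h0 : (√p - √q) ^ 2 = 0 := by rw [← add_sub_two_mul_sqrt_mul hp hq, h, sub_self]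
  rwa [sq_eq_zero_iff, sub_eq_zero, sqrt_inj hp hq] at h0

theorem two_mul_sqrt_mul_le_mul_inv_add_mul {a c t : ℝ} (ha : 0 ≤ a) (hc : 0 ≤ c) (ht : 0 < t) :
    2 * √(a * c) ≤ a * t⁻¹ + t * c := by
  have h : a * c = (a * t⁻¹) * (t * c) := by field_simp
  rw [h]
  exact two_mul_sqrt_mul_le_add (by positivity) (by positivity)

/-- The choice `t = (√a + η) / (√c + η)` nearly attains `inf_{t > 0} (a / t + t c) = 2 √(a c)`,
also when `a` or `c` vanishes. -/
theorem mul_inv_add_mul_le {a c η : ℝ} (ha : 0 ≤ a) (hc : 0 ≤ c) (hη : 0 < η) :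
    a * ((√a + η) / (√c + η))⁻¹ + (√a + η) / (√c + η) * c ≤ 2 * √(a * c) + η * (√a + √c) := by
  have hsa := sqrt_nonneg a
  have hsc := sqrt_nonneg c
  have h1 : a * ((√a + η) / (√c + η))⁻¹ ≤ √a * (√c + η) := by
    rw [inv_div, mul_div_assoc', div_le_iff₀ (by positivity)]
    nlinarith [mul_self_sqrt ha, mul_nonneg (mul_nonneg hsa hη.le) (add_nonneg hsc hη.le)]
  have h2 : (√a + η) / (√c + η) * c ≤ (√a + η) * √c := by
    rw [div_mul_eq_mul_div, div_le_iff₀ (by positivity)]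
    nlinarith [mul_self_sqrt hc, mul_nonneg (mul_nonneg hsc hη.le) (add_nonneg hsa hη.le)]
  rw [sqrt_mul ha]
  linarith

end Real

theorem ciSup_eq_ciInf_iff {α ι : Type*} [ConditionallyCompleteLinearOrder α] [Finite ι]
    [Nonempty ι] {f : ι → α} : ⨆ i, f i = ⨅ i, f i ↔ ∀ i, f i = ⨆ i, f i :=
  ⟨fun h i => le_antisymm (le_ciSup (Finite.bddAbove_range f) i)
      (h ▸ ciInf_le (Finite.bddBelow_range f) i),
    fun h => le_antisymm (le_ciInf fun i => (h i).ge)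
      (ciInf_le_ciSup (Finite.bddBelow_range f) (Finite.bddAbove_range f))⟩

theorem convex_setOf_forall_pos {ι : Type*} : Convex ℝ {x : ι → ℝ | ∀ i, 0 < x i} :=
  fun _ hx _ hy _ _ ha hb hab i => convex_Ioi (0 : ℝ) (hx i) (hy i) ha hb hab

section FiniteDimension

variable {ι : Type*} [Fintype ι]

theorem convexOn_sum_mul_inv_add_mul {a : ι → ℝ} (ha : ∀ i, 0 ≤ a i) (c : ι → ℝ) :
    ConvexOn ℝ {x : ι → ℝ | ∀ i, 0 < x i} fun x => ∑ i, (a i * (x i)⁻¹ + x i * c i) := by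
  refine ⟨convex_setOf_forall_pos, fun x hx y hy s t hs ht hst => ?_⟩
  simp only [smul_eq_mul, Pi.add_apply, Pi.smul_apply, Finset.mul_sum, ← Finset.sum_add_distrib]
  refine Finset.sum_le_sum fun i _ => ?_
  have hinv : (s * x i + t * y i)⁻¹ ≤ s * (x i)⁻¹ + t * (y i)⁻¹ := by
    simpa only [_root_.zpow_neg_one, smul_eq_mul] using
      (convexOn_zpow (-1)).2 (Set.mem_Ioi.2 (hx i)) (Set.mem_Ioi.2 (hy i)) hs ht hst
  nlinarith [mul_le_mul_of_nonneg_left hinv (ha i)]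

theorem continuousOn_sum_mul_inv_add_mul (a c : ι → ℝ) :
    ContinuousOn (fun x : ι → ℝ => ∑ i, (a i * (x i)⁻¹ + x i * c i))
      {x : ι → ℝ | ∀ i, 0 < x i} :=
  continuousOn_finsetSum _ fun i _ =>
    (continuousOn_const.mul ((continuous_apply i).continuousOn.inv₀ fun _ hx => (hx i).ne')).add
      ((continuous_apply i).continuousOn.mul continuousOn_const)

theorem isGLB_sum_mul_inv_add_mul {a c : ι → ℝ} (ha : ∀ i, 0 ≤ a i) (hc : ∀ i, 0 ≤ c i) :
    IsGLB ((fun x : ι → ℝ => ∑ i, (a i * (x i)⁻¹ + x i * c i)) '' {x | ∀ i, 0 < x i})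
      (2 * ∑ i, √(a i * c i)) := by
  refine ⟨?_, fun m hm => ?_⟩
  · rintro _ ⟨x, hx, rfl⟩
    rw [Finset.mul_sum]
    exact Finset.sum_le_sum fun i _ =>
      Real.two_mul_sqrt_mul_le_mul_inv_add_mul (ha i) (hc i) (hx i)
  set S := ∑ i, (√(a i) + √(c i))
  refine le_of_forall_pos_le_add fun ε hε => ?_
  obtain ⟨η, hη, hηS⟩ : ∃ η > 0, η * S ≤ ε := by
    refine ⟨ε / (S + 1), by positivity, ?_⟩
    rw [div_mul_eq_mul_div, div_le_iff₀ (by positivity)]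
    nlinarith [show 0 ≤ S by positivity]
  have hx (i : ι) : 0 < (√(a i) + η) / (√(c i) + η) :=
    div_pos (add_pos_of_nonneg_of_pos (Real.sqrt_nonneg _) hη)
      (add_pos_of_nonneg_of_pos (Real.sqrt_nonneg _) hη)
  calc m ≤ ∑ i, (a i * ((√(a i) + η) / (√(c i) + η))⁻¹ + (√(a i) + η) / (√(c i) + η) * c i) :=
        hm ⟨_, hx, rfl⟩
    _ ≤ ∑ i, (2 * √(a i * c i) + η * (√(a i) + √(c i))) :=
        Finset.sum_le_sum fun i _ => Real.mul_inv_add_mul_le (ha i) (hc i) hη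
    _ ≤ 2 * ∑ i, √(a i * c i) + ε := by
        rw [Finset.sum_add_distrib, ← Finset.mul_sum, ← Finset.mul_sum]
        linarith

theorem concaveOn_dotProduct {s : Set (ι → ℝ)} (hs : Convex ℝ s) (y : ι → ℝ) :
    ConcaveOn ℝ s (· ⬝ᵥ y) :=
  ⟨hs, fun _ _ _ _ _ _ _ _ _ => by simp [add_dotProduct, smul_dotProduct]⟩

theorem isGreatest_dotProduct_image_stdSimplex [Nonempty ι] (y : ι → ℝ) :
    IsGreatest ((· ⬝ᵥ y) '' stdSimplex ℝ ι) (⨆ i, y i) := by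
  classical
  obtain ⟨i₀, hi₀⟩ := exists_eq_ciSup_of_finite (f := y)
  refine ⟨⟨Pi.single i₀ 1, single_mem_stdSimplex ℝ i₀, (single_one_dotProduct i₀ y).trans hi₀⟩, ?_⟩
  rintro _ ⟨w, hw, rfl⟩
  calc w ⬝ᵥ y ≤ ∑ i, w i * ⨆ j, y j :=
        Finset.sum_le_sum fun i _ =>
          mul_le_mul_of_nonneg_left (le_ciSup (Finite.bddAbove_range y) i) (hw.1 i)
    _ = ⨆ i, y i := by rw [← Finset.sum_mul, hw.2, one_mul]

end FiniteDimension

namespace Matrix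

variable {ι : Type*} [Fintype ι] {A : Matrix ι ι ℝ}

def lehnerVec (A : Matrix ι ι ℝ) (x : ι → ℝ) : ι → ℝ := x⁻¹ + A *ᵥ x

def sqrtSum (A : Matrix ι ι ℝ) (w : ι → ℝ) : ℝ := ∑ i, √(w i * (A *ᵥ w) i)

theorem mulVec_apply_nonneg (hA : ∀ i j, 0 ≤ A i j) {w : ι → ℝ} (hw : ∀ i, 0 ≤ w i) (i : ι) :
    0 ≤ (A *ᵥ w) i :=
  Finset.sum_nonneg fun j _ => mul_nonneg (hA i j) (hw j)

theorem IsSymm.dotProduct_mulVec_comm (hA : A.IsSymm) (v w : ι → ℝ) :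
    v ⬝ᵥ (A *ᵥ w) = w ⬝ᵥ (A *ᵥ v) := by
  have h : v ᵥ* A = A *ᵥ v := by simpa only [hA.eq] using vecMul_transpose A v
  rw [dotProduct_mulVec, h, dotProduct_comm]

theorem IsSymm.sum_mulVec (hA : A.IsSymm) (w : ι → ℝ) :
    ∑ i, (A *ᵥ w) i = w ⬝ᵥ fun j => ∑ k, A j k := by
  rw [← one_dotProduct, hA.dotProduct_mulVec_comm]
  simp [dotProduct, mulVec]

theorem IsSymm.sum_mulVec_le [Nonempty ι] (hA : A.IsSymm) {w : ι → ℝ}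
    (hw : w ∈ stdSimplex ℝ ι) : ∑ i, (A *ᵥ w) i ≤ ⨆ i, ∑ j, A i j :=
  hA.sum_mulVec w ▸ (isGreatest_dotProduct_image_stdSimplex _).2 ⟨w, hw, rfl⟩

theorem IsSymm.dotProduct_lehnerVec (hA : A.IsSymm) (w x : ι → ℝ) :
    w ⬝ᵥ A.lehnerVec x = ∑ i, (w i * (x i)⁻¹ + x i * (A *ᵥ w) i) := by
  rw [lehnerVec, dotProduct_add, hA.dotProduct_mulVec_comm, dotProduct, dotProduct,
    ← Finset.sum_add_distrib]
  rfl

theorem IsSymm.isGLB_dotProduct_lehnerVec (hA : A.IsSymm) (hA₀ : ∀ i j, 0 ≤ A i j)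
    {w : ι → ℝ} (hw : ∀ i, 0 ≤ w i) :
    IsGLB ((fun x => w ⬝ᵥ A.lehnerVec x) '' {x | ∀ i, 0 < x i}) (2 * A.sqrtSum w) := by
  rw [funext (hA.dotProduct_lehnerVec w)]
  exact isGLB_sum_mul_inv_add_mul hw (mulVec_apply_nonneg hA₀ hw)

theorem IsSymm.convexOn_dotProduct_lehnerVec (hA : A.IsSymm) {w : ι → ℝ} (hw : ∀ i, 0 ≤ w i) :
    ConvexOn ℝ {x | ∀ i, 0 < x i} fun x => w ⬝ᵥ A.lehnerVec x := by
  rw [funext (hA.dotProduct_lehnerVec w)]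
  exact convexOn_sum_mul_inv_add_mul hw _

theorem IsSymm.continuousOn_dotProduct_lehnerVec (hA : A.IsSymm) (w : ι → ℝ) :
    ContinuousOn (fun x => w ⬝ᵥ A.lehnerVec x) {x | ∀ i, 0 < x i} := by
  rw [funext (hA.dotProduct_lehnerVec w)]
  exact continuousOn_sum_mul_inv_add_mul _ _

theorem continuous_sqrtSum (A : Matrix ι ι ℝ) : Continuous A.sqrtSum := by
  unfold sqrtSum
  fun_prop

theorem isCompact_sqrtSum_image_stdSimplex (A : Matrix ι ι ℝ) :
    IsCompact (A.sqrtSum '' stdSimplex ℝ ι) :=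
  (isCompact_stdSimplex ℝ ι).image A.continuous_sqrtSum

theorem sInf_iSup_lehnerVec_eq [Nonempty ι] (hA : A.IsSymm) (hA₀ : ∀ i j, 0 ≤ A i j) :
    sInf ((fun x => ⨆ i, A.lehnerVec x i) '' {x | ∀ i, 0 < x i}) =
      2 * sSup (A.sqrtSum '' stdSimplex ℝ ι) := by
  have hX : (stdSimplex ℝ ι).Nonempty := Set.nonempty_coe_sort.1 inferInstance
  have hsup : IsLUB ((fun w => 2 * A.sqrtSum w) '' stdSimplex ℝ ι)
      (2 * sSup (A.sqrtSum '' stdSimplex ℝ ι)) := by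
    rw [← Set.image_image (2 * ·)]
    exact (isLUB_csSup (hX.image _) A.isCompact_sqrtSum_image_stdSimplex.bddAbove).mul_left
      zero_le_two
  have hinf : IsGLB ((fun x => ⨆ i, A.lehnerVec x i) '' {x | ∀ i, 0 < x i})
      (sInf ((fun x => ⨆ i, A.lehnerVec x i) '' {x | ∀ i, 0 < x i})) := by
    refine isGLB_csInf ⟨_, 1, fun _ => one_pos, rfl⟩ ⟨0, ?_⟩
    rintro _ ⟨x, hx, rfl⟩
    obtain ⟨i⟩ := ‹Nonempty ι›
    exact le_ciSup_of_le (Finite.bddAbove_range _) i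
      (add_nonneg (inv_nonneg.2 (hx i).le) (mulVec_apply_nonneg hA₀ (fun j => (hx j).le) i))
  -- Sion's theorem wants the compact variable on the minimising side: work in `ℝᵒᵈ`.
  exact (Sion.minimax (β := ℝᵒᵈ) (f := fun w x => OrderDual.toDual (w ⬝ᵥ A.lehnerVec x))
    hX (isCompact_stdSimplex ℝ ι)
    (fun _ _ => (continuous_id.dotProduct continuous_const).continuousOn.upperSemicontinuousOn)
    (fun _ _ => ((concaveOn_dotProduct (convex_stdSimplex ℝ ι) _).quasiconcaveOn).dual)
    convex_setOf_forall_pos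
    (fun w _ => (hA.continuousOn_dotProduct_lehnerVec w).lowerSemicontinuousOn)
    (fun w hw => (hA.convexOn_dotProduct_lehnerVec hw.1).quasiconvexOn.dual)
    (convex_stdSimplex ℝ ι)
    (fun w => OrderDual.toDual (2 * A.sqrtSum w))
    (fun w hw => hA.isGLB_dotProduct_lehnerVec hA₀ hw.1) _ hsup
    (fun x => OrderDual.toDual (⨆ i, A.lehnerVec x i))
    (fun _ _ => (isGreatest_dotProduct_image_stdSimplex _).isLUB) _ hinf).symm

theorem sqrtSum_le [Nonempty ι] (hA : A.IsSymm) (hA₀ : ∀ i j, 0 ≤ A i j) {w : ι → ℝ}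
    (hw : w ∈ stdSimplex ℝ ι) : A.sqrtSum w ≤ √(⨆ i, ∑ j, A i j) :=
  calc A.sqrtSum w = ∑ i, √(w i) * √((A *ᵥ w) i) := by
        simp only [sqrtSum, Real.sqrt_mul (hw.1 _)]
    _ ≤ √(∑ i, w i) * √(∑ i, (A *ᵥ w) i) :=
        Real.sum_sqrt_mul_sqrt_le _ hw.1 (mulVec_apply_nonneg hA₀ hw.1)
    _ ≤ √(⨆ i, ∑ j, A i j) := by
        rw [hw.2, Real.sqrt_one, one_mul]
        exact Real.sqrt_le_sqrt (hA.sum_mulVec_le hw)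

theorem sSup_sqrtSum_le [Nonempty ι] (hA : A.IsSymm) (hA₀ : ∀ i j, 0 ≤ A i j) :
    sSup (A.sqrtSum '' stdSimplex ℝ ι) ≤ √(⨆ i, ∑ j, A i j) := by
  refine csSup_le ((Set.nonempty_coe_sort.1 inferInstance).image _) ?_
  rintro _ ⟨w, hw, rfl⟩
  exact sqrtSum_le hA hA₀ hw

theorem mulVec_eq_smul_of_sqrtSum_eq [Nonempty ι] (hA : A.IsSymm) (hA₀ : ∀ i j, 0 ≤ A i j)
    {w : ι → ℝ} (hw : w ∈ stdSimplex ℝ ι) (hM : 0 < ⨆ i, ∑ j, A i j)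
    (hF : A.sqrtSum w = √(⨆ i, ∑ j, A i j)) : A *ᵥ w = (⨆ i, ∑ j, A i j) • w := by
  set M := ⨆ i, ∑ j, A i j
  set s := √M
  have hs : 0 < s := Real.sqrt_pos.2 hM
  have hg := mulVec_apply_nonneg hA₀ hw.1
  have hpq (i : ι) : w i * (A *ᵥ w) i = (w i * s) * (s⁻¹ * (A *ᵥ w) i) := by field_simp
  have hp (i : ι) : 0 ≤ w i * s := mul_nonneg (hw.1 i) hs.le
  have hq (i : ι) : 0 ≤ s⁻¹ * (A *ᵥ w) i := mul_nonneg (inv_nonneg.2 hs.le) (hg i)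
  have hle (i : ι) : 2 * √(w i * (A *ᵥ w) i) ≤ w i * s + s⁻¹ * (A *ᵥ w) i :=
    hpq i ▸ Real.two_mul_sqrt_mul_le_add (hp i) (hq i)
  have hge : ∑ i, (w i * s + s⁻¹ * (A *ᵥ w) i) ≤ ∑ i, 2 * √(w i * (A *ᵥ w) i) :=
    calc ∑ i, (w i * s + s⁻¹ * (A *ᵥ w) i) = s + s⁻¹ * ∑ i, (A *ᵥ w) i := by
          rw [Finset.sum_add_distrib, ← Finset.sum_mul, ← Finset.mul_sum, hw.2, one_mul]
      _ ≤ s + s⁻¹ * M := by gcongr; exact hA.sum_mulVec_le hw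
      _ = 2 * A.sqrtSum w := by
          rw [hF, ← Real.sq_sqrt hM.le]
          field_simp
          ring
      _ = ∑ i, 2 * √(w i * (A *ᵥ w) i) := Finset.mul_sum _ _ _
  have heq := (Finset.sum_eq_sum_iff_of_le fun i _ => hle i).1
    (le_antisymm (Finset.sum_le_sum fun i _ => hle i) hge)
  ext i
  have h := Real.eq_of_two_mul_sqrt_mul_eq_add (hp i) (hq i) (hpq i ▸ heq i (Finset.mem_univ i))
  rw [Pi.smul_apply, smul_eq_mul, ← Real.sq_sqrt hM.le]
  field_simp at h
  linarith

theorem pow_mulVec_of_mulVec_eq_smul [DecidableEq ι] {w : ι → ℝ} {μ : ℝ} (h : A *ᵥ w = μ • w)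
    (k : ℕ) : (A ^ k) *ᵥ w = μ ^ k • w := by
  induction k with
  | zero => simp
  | succ k ih => rw [pow_succ, ← mulVec_mulVec, h, mulVec_smul, ih, smul_smul, pow_succ']

theorem IsIrreducible.pos_of_mulVec_eq_smul [DecidableEq ι] (hA : A.IsIrreducible)
    {w : ι → ℝ} {μ : ℝ} (h : A *ᵥ w = μ • w) (hw : ∀ i, 0 ≤ w i) {j : ι} (hj : 0 < w j)
    (i : ι) : 0 < w i := by
  obtain ⟨k, -, hk⟩ := (isIrreducible_iff_exists_pow_pos hA.nonneg).1 hA i j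
  have hpos : 0 < μ ^ k * w i :=
    calc 0 < (A ^ k) i j * w j := mul_pos hk hj
      _ ≤ ((A ^ k) *ᵥ w) i :=
        Finset.single_le_sum (fun l _ => mul_nonneg (pow_apply_nonneg hA.nonneg k i l) (hw l))
          (Finset.mem_univ j)
      _ = μ ^ k * w i := by rw [pow_mulVec_of_mulVec_eq_smul h]; rfl
  exact (hw i).lt_of_ne fun h0 => hpos.ne' (by rw [← h0, mul_zero])

theorem IsSymm.rowSum_eq_of_mulVec_eq_smul (hA : A.IsSymm) {w : ι → ℝ} {M : ℝ}
    (h : A *ᵥ w = M • w) (hw : ∀ i, 0 < w i) (hM : ∀ i, ∑ j, A i j ≤ M) (i : ι) :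
    ∑ j, A i j = M := by
  have hsum : ∑ j, w j * (M - ∑ k, A j k) = 0 := by
    have h1 := hA.sum_mulVec w
    simp only [h, Pi.smul_apply, smul_eq_mul, ← Finset.mul_sum, dotProduct] at h1
    rw [Finset.sum_congr rfl fun j _ => mul_sub (w j) M _, Finset.sum_sub_distrib, ← h1,
      ← Finset.sum_mul, mul_comm, sub_self]
  have := (Finset.sum_eq_zero_iff_of_nonneg fun j _ =>
    mul_nonneg (hw j).le (sub_nonneg.2 (hM j))).1 hsum i (Finset.mem_univ i)
  linarith [(mul_eq_zero.1 this).resolve_left (hw i).ne']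

theorem sqrtSum_of_mulVec_eq_smul {w : ι → ℝ} {μ : ℝ} (h : A *ᵥ w = μ • w)
    (hw : ∀ i, 0 ≤ w i) (hμ : 0 ≤ μ) : A.sqrtSum w = √μ * ∑ i, w i := by
  rw [sqrtSum, h, Finset.mul_sum]
  refine Finset.sum_congr rfl fun i _ => ?_
  rw [Pi.smul_apply, smul_eq_mul, mul_left_comm, Real.sqrt_mul hμ, Real.sqrt_mul_self (hw i)]

theorem sSup_sqrtSum_eq_sqrt_iff [DecidableEq ι] [Nonempty ι] (hA : A.IsSymm)
    (hirr : A.IsIrreducible) :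
    sSup (A.sqrtSum '' stdSimplex ℝ ι) = √(⨆ i, ∑ j, A i j) ↔
      ∀ i, ∑ j, A i j = ⨆ i, ∑ j, A i j := by
  set M := ⨆ i, ∑ j, A i j
  have hR (i : ι) : ∑ j, A i j ≤ M :=
    le_ciSup (f := fun i => ∑ j, A i j) (Finite.bddAbove_range _) i
  have hR₀ (i : ι) : 0 ≤ ∑ j, A i j := Finset.sum_nonneg fun j _ => hirr.nonneg i j
  have hM₀ : 0 ≤ M := (hR₀ (Classical.arbitrary ι)).trans (hR _)
  constructor
  · intro hF
    obtain hM | hM := hM₀.eq_or_lt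
    · exact fun i => le_antisymm (hR i) (hM ▸ hR₀ i)
    obtain ⟨w, hw, hFw⟩ := A.isCompact_sqrtSum_image_stdSimplex.sSup_mem
      ((Set.nonempty_coe_sort.1 inferInstance).image _)
    have heig := mulVec_eq_smul_of_sqrtSum_eq hA hirr.nonneg hw hM (hFw.trans hF)
    obtain ⟨j, -, hj⟩ := Finset.exists_lt_of_sum_lt (s := Finset.univ) (f := 0) (g := w)
      (by simp [hw.2])
    exact hA.rowSum_eq_of_mulVec_eq_smul heig (hirr.pos_of_mulVec_eq_smul heig hw.1 hj) hR
  · intro hconst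
    set u := (stdSimplex.barycenter : stdSimplex ℝ ι)
    have heig : A *ᵥ u.1 = M • u.1 := by
      ext i
      simp [u, mulVec, dotProduct, ← Finset.sum_mul, ← hconst i]
    refine le_antisymm (sSup_sqrtSum_le hA hirr.nonneg)
      (le_csSup A.isCompact_sqrtSum_image_stdSimplex.bddAbove ⟨u.1, u.2, ?_⟩)
    rw [sqrtSum_of_mulVec_eq_smul heig u.2.1 hM₀, u.2.2, mul_one]

end Matrix

theorem lehner_independent_entries_general
    (d : ℕ) (hd : 1 ≤ d) (b : Fin d → Fin d → ℝ)
    (hbsymm : ∀ i j, b i j = b j i)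
    (K : ℝ)
    (hK : K = sInf {x : ℝ | ∃ xv : Fin d → ℝ, (∀ i, 0 < xv i) ∧
        x = ⨆ i, ((xv i)⁻¹ + ∑ j, b i j ^ 2 * xv j)})
    (B : Matrix (Fin d) (Fin d) ℝ) (hB : B = Matrix.of fun i j => b i j ^ 2) :
    (K = 2 * sSup {x : ℝ | ∃ w : Fin d → ℝ, (∀ i, 0 ≤ w i) ∧ (∑ i, w i) = 1 ∧
        x = ∑ i, Real.sqrt (w i * ∑ j, b i j ^ 2 * w j)}) ∧
    (K ≤ 2 * ⨆ i, Real.sqrt (∑ j, b i j ^ 2)) ∧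
    ((∀ i j : Fin d, ∃ k : ℕ, 1 ≤ k ∧ 0 < (B ^ k) i j) →
      (K = 2 * ⨆ i, Real.sqrt (∑ j, b i j ^ 2) ↔
        (⨆ i, ∑ j, b i j ^ 2) = ⨅ i, ∑ j, b i j ^ 2)) := by
  have : Nonempty (Fin d) := ⟨⟨0, hd⟩⟩
  have hA : B.IsSymm := hB ▸ IsSymm.ext fun i j => by rw [of_apply, of_apply, hbsymm]
  have hA₀ (i j : Fin d) : 0 ≤ B i j := hB ▸ sq_nonneg (b i j)
  have hKS : K = 2 * sSup (B.sqrtSum '' stdSimplex ℝ (Fin d)) := by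
    rw [hK, ← sInf_iSup_lehnerVec_eq hA hA₀, hB]
    congr 1
    ext
    exact ⟨fun ⟨x, hx, h⟩ => ⟨x, hx, h.symm⟩, fun ⟨x, hx, h⟩ => ⟨x, hx, h.symm⟩⟩
  have hR : (fun i => ∑ j, b i j ^ 2) = fun i => ∑ j, B i j := by rw [hB]; rfl
  have hsqrt : ⨆ i, √(∑ j, b i j ^ 2) = √(⨆ i, ∑ j, b i j ^ 2) :=
    (Real.sqrt_monotone.map_ciSup_of_continuousAt Real.continuous_sqrt.continuousAt
      (Finite.bddAbove_range _)).symm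
  refine ⟨?_, ?_, fun hirr => ?_⟩
  · rw [hKS, hB]
    congr 2
    ext
    exact ⟨fun ⟨w, hw, h⟩ => ⟨w, hw.1, hw.2, h.symm⟩, fun ⟨w, h₀, h₁, h⟩ => ⟨w, ⟨h₀, h₁⟩, h.symm⟩⟩
  · rw [hKS, hsqrt, hR]
    gcongr
    exact sSup_sqrtSum_le hA hA₀
  · rw [hKS, hsqrt, mul_right_inj' two_ne_zero, hR,
      sSup_sqrtSum_eq_sqrt_iff hA ((isIrreducible_iff_exists_pow_pos hA₀).2 hirr),
      ciSup_eq_ciInf_iff]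

/-- Lehner's formula for the independent-entry free model:
variational formulas for K = ‖X_free‖ and characterization of equality
K = 2σ(X) in the irreducible case. -/
theorem lehner_independent_entries
    (d : ℕ) (hd : 1 ≤ d) (b : Fin d → Fin d → ℝ)
    (hbnn : ∀ i j, 0 ≤ b i j) (hbsymm : ∀ i j, b i j = b j i)
    (K : ℝ)
    (hK : K = sInf {x : ℝ | ∃ xv : Fin d → ℝ, (∀ i, 0 < xv i) ∧
        x = ⨆ i, ((xv i)⁻¹ + ∑ j, b i j ^ 2 * xv j)})
    (B : Matrix (Fin d) (Fin d) ℝ) (hB : B = Matrix.of fun i j => b i j ^ 2) :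
    (K = 2 * sSup {x : ℝ | ∃ w : Fin d → ℝ, (∀ i, 0 ≤ w i) ∧ (∑ i, w i) = 1 ∧
        x = ∑ i, Real.sqrt (w i * ∑ j, b i j ^ 2 * w j)}) ∧
    (K ≤ 2 * ⨆ i, Real.sqrt (∑ j, b i j ^ 2)) ∧
    ((∀ i j : Fin d, ∃ k : ℕ, 1 ≤ k ∧ 0 < (B ^ k) i j) →
      (K = 2 * ⨆ i, Real.sqrt (∑ j, b i j ^ 2) ↔
        (⨆ i, ∑ j, b i j ^ 2) = ⨅ i, ∑ j, b i j ^ 2)) :=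
  lehner_independent_entries_general d hd b hbsymm K hK B hB
end
end
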